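/- arXiv:2503.03910 — 2 statements merged into one kernel-verified Lean document; each statement's English description precedes it below -/
import Mathlib

section
/- (Score and Hessian bounds for heteroscedastic Gaussian mixture densities.) Fix a probability distribution F on R², a 2×2 symmetric positive definite matrix Ψ, and z ∈ R². Then: (a) ( ‖∇f_{F,Ψ}(z)‖₂ / f_{F,Ψ}(z) )² ≤ ‖Ψ⁻¹‖_F · log( 1 / ((2π)²·det(Ψ)·f_{F,Ψ}(z)²) ); (b) ‖ Ψ + Ψ·(∇²f_{F,Ψ}(z)/f_{F,Ψ}(z))·Ψ ‖_F ≤ ‖Ψ‖_F · log( 1 / ((2π)²·det(Ψ)·f_{F,Ψ}(z)²) ); (c) for all ρ ∈ (0, 1/(2π√e)): ‖∇f_{F,Ψ}(z)‖₂ / max( f_{F,Ψ}(z), ρ/√det(Ψ) ) ≤ ‖Ψ⁻¹‖_F^{1/2} · φ₊(ρ); (d) for all ρ ∈ (0, 1/(2πe)): ( ‖∇f_{F,Ψ}(z)‖₂ / f_{F,Ψ}(z) )² · f_{F,Ψ}(z) / max( f_{F,Ψ}(z), ρ/√det(Ψ) ) ≤ ‖Ψ⁻¹‖_F · φ₊(ρ)²,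 and ‖ Ψ + Ψ·(∇²f_{F,Ψ}(z)/f_{F,Ψ}(z))·Ψ ‖_F · f_{F,Ψ}(z) / max( f_{F,Ψ}(z), ρ/√det(Ψ) ) ≤ ‖Ψ‖_F · φ₊(ρ)². -/
open MeasureTheory ProbabilityTheory Matrix Real Filter Set
open scoped ENNReal NNReal Classical

noncomputable section

namespace PolicyEB

abbrev V : Type := Fin 2 → ℝ
abbrev M2 : Type := Matrix (Fin 2) (Fin 2) ℝ

instance : MeasurableSpace M2 := (inferInstance : MeasurableSpace (Fin 2 → Fin 2 → ℝ))

attribute [local instance] Matrix.normedAddCommGroup Matrix.normedSpace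

/-- Loewner partial order `A ⪯ B` on 2×2 real matrices. -/
def LoewnerLE (A B : M2) : Prop := (B - A).PosSemidef

/-- The standard bivariate Gaussian distribution on `ℝ²`. -/
def stdGauss2 : Measure V :=
  Measure.map (fun p : ℝ × ℝ => ![p.1, p.2])
    ((gaussianReal 0 1).prod (gaussianReal 0 1))

/-- Lebesgue measure on `ℝ²`. -/
def vol2 : Measure V := Measure.pi fun _ => volume

/-- Euclidean norm on `ℝ²`. -/
def n2 (v : V) : ℝ := Real.sqrt (v 0 ^ 2 + v 1 ^ 2)

/-- Sup norm on `ℝ²`. -/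
def ninf (v : V) : ℝ := max |v 0| |v 1|

/-- `ℓ² → ℓ²` operator norm of a 2×2 matrix. -/
def opN (A : M2) : ℝ := sSup {r : ℝ | ∃ x : V, n2 x ≤ 1 ∧ r = n2 (A.mulVec x)}

/-- Frobenius norm of a 2×2 matrix. -/
def frobN (A : M2) : ℝ := Real.sqrt (∑ i, ∑ j, (A i j) ^ 2)

/-- Unnormalized Gaussian kernel `φ_Ψ(x) = exp(-½ xᵀ Ψ⁻¹ x)`. -/
def gk (Ψ : M2) (x : V) : ℝ := Real.exp (-(1 / 2) * (x ⬝ᵥ Ψ⁻¹.mulVec x))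

/-- Normalizing constant `det(2πΨ)^{-1/2}` of a bivariate Gaussian. -/
def gconst (Ψ : M2) : ℝ := (Real.sqrt ((2 * π) ^ 2 * Ψ.det))⁻¹

/-- Mixture density `f_{F,Ψ}`. -/
def mixD (F : Measure V) (Ψ : M2) (x : V) : ℝ := ∫ τ, gconst Ψ * gk Ψ (x - τ) ∂F

/-- Gradient `∇f_{F,Ψ}` of the mixture density. -/
def mixGrad (F : Measure V) (Ψ : M2) (x : V) : V :=
  ∫ τ, (gconst Ψ * gk Ψ (x - τ)) • Ψ⁻¹.mulVec (τ - x) ∂F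

/-- Hessian `∇²f_{F,Ψ}` of the mixture density. -/
def mixHess (F : Measure V) (Ψ : M2) (x : V) : M2 :=
  ∫ τ, (gconst Ψ * gk Ψ (x - τ)) • (Ψ⁻¹ * vecMulVec (τ - x) (τ - x) * Ψ⁻¹ - Ψ⁻¹) ∂F

/-- Posterior mean `E_{F,Ψ}[τ | z]`. -/
def postMean (F : Measure V) (Ψ : M2) (z : V) : V :=
  (∫ τ, gk Ψ (z - τ) ∂F)⁻¹ • ∫ τ, gk Ψ (z - τ) • τ ∂F

/-- Squared Hellinger distance between two densities on `ℝ²`. -/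
def hellSq (f g : V → ℝ) : ℝ := (1 / 2) * ∫ z, (Real.sqrt (f z) - Real.sqrt (g z)) ^ 2 ∂vol2

/-- `ℓ^p` norm on `Fin J → ℝ` for `p ∈ [1,∞]`. -/
def pN {J : ℕ} (p : ℝ≥0∞) (v : Fin J → ℝ) : ℝ :=
  if p = ⊤ then ⨆ j, |v j| else (∑ j, |v j| ^ p.toReal) ^ (1 / p.toReal)

/-- Unit `ℓ^p` ball in `ℝ^J`. -/
def Bp (J : ℕ) (p : ℝ≥0∞) : Set (Fin J → ℝ) := {v | pN p v ≤ 1}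

/-- Normalization factor `N_p`. -/
def Np (J : ℕ) (p : ℝ≥0∞) : ℝ :=
  if p = ⊤ then (J : ℝ) else (J : ℝ) ^ ((p.toReal - 1) / p.toReal)

/-- `κ_J = (3/J) log (J / (2πe)^{1/3})`. -/
def kappaJ (J : ℕ) : ℝ := (3 / (J : ℝ)) * Real.log ((J : ℝ) / (2 * π * Real.exp 1) ^ ((1 : ℝ) / 3))

/-- `φ₊(ρ) = √(log (1/(2πρ)²))`. -/
def phiPlus (ρ : ℝ) : ℝ := Real.sqrt (Real.log (1 / (2 * π * ρ) ^ 2))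

variable {J T : ℕ} {Ωs : Type}

/-- True parameter `θ_j = α_{t_j} + Ω_{t_j}^{1/2} τ_j`. -/
def theta (t : Fin J → Fin T) (α : Fin T → V) (Ws : Fin T → M2)
    (τ : Fin J → Ωs → V) (j : Fin J) (ω : Ωs) : V :=
  α (t j) + (Ws (t j)).mulVec (τ j ω)

/-- Observation `Y_j = θ_j + Σ_j^{1/2} ε_j`. -/
def obsY (t : Fin J → Fin T) (α : Fin T → V) (Ws : Fin T → M2) (Ss : Fin J → M2)
    (τ ε : Fin J → Ωs → V) (j : Fin J) (ω : Ωs) : V :=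
  theta t α Ws τ j ω + (Ss j).mulVec (ε j ω)

/-- All observations `Y_{1:J}` as a map into `(ℝ²)^J`. -/
def Yall (t : Fin J → Fin T) (α : Fin T → V) (Ws : Fin T → M2) (Ss : Fin J → M2)
    (τ ε : Fin J → Ωs → V) (ω : Ωs) : Fin J → V :=
  fun j => obsY t α Ws Ss τ ε j ω

/-- Standardized observation `Z_j = Ω_{t_j}^{-1/2}(Y_j - α_{t_j})`. -/
def Zres (t : Fin J → Fin T) (α : Fin T → V) (Ws : Fin T → M2) (Ss : Fin J → M2)
    (τ ε : Fin J → Ωs → V) (j : Fin J) (ω : Ωs) : V :=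
  (Ws (t j))⁻¹.mulVec (obsY t α Ws Ss τ ε j ω - α (t j))

/-- Standardized noise covariance `Ψ_j = Ω_{t_j}^{-1/2} Σ_j Ω_{t_j}^{-1/2}`. -/
def PsiM (t : Fin J → Fin T) (Ws : Fin T → M2) (Ss : Fin J → M2) (j : Fin J) : M2 :=
  (Ws (t j))⁻¹ * (Ss j * Ss j) * (Ws (t j))⁻¹

/-- `Z̄_J = max(max_j ‖Z_j‖₂, 1)`. -/
def Zbar (t : Fin J → Fin T) (α : Fin T → V) (Ws : Fin T → M2) (Ss : Fin J → M2)
    (τ ε : Fin J → Ωs → V) (ω : Ωs) : ℝ :=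
  max (⨆ j, n2 (Zres t α Ws Ss τ ε j ω)) 1

/-- Oracle posterior mean `θ_j^*`. -/
def thetaStar (F0 : Measure V) (t : Fin J → Fin T) (α : Fin T → V) (Ws : Fin T → M2)
    (Ss : Fin J → M2) (τ ε : Fin J → Ωs → V) (j : Fin J) (ω : Ωs) : V :=
  α (t j) + (Ws (t j)).mulVec (postMean F0 (PsiM t Ws Ss j) (Zres t α Ws Ss τ ε j ω))

/-- Estimated standardized observation `Ẑ_j`. -/
def Zhat (t : Fin J → Fin T) (α : Fin T → V) (Ws : Fin T → M2) (Ss : Fin J → M2)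
    (τ ε : Fin J → Ωs → V) (ahat : Fin T → Ωs → V) (Whts : Fin T → Ωs → M2)
    (j : Fin J) (ω : Ωs) : V :=
  (Whts (t j) ω)⁻¹.mulVec (obsY t α Ws Ss τ ε j ω - ahat (t j) ω)

/-- Estimated standardized noise covariance `Ψ̂_j`. -/
def PsiHat (t : Fin J → Fin T) (Ss : Fin J → M2) (Whts : Fin T → Ωs → M2)
    (j : Fin J) (ω : Ωs) : M2 :=
  (Whts (t j) ω)⁻¹ * (Ss j * Ss j) * (Whts (t j) ω)⁻¹

/-- Empirical Bayes posterior mean `θ̂_j^*` built from an estimated prior `F̂`. -/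
def thetaHatStar (Fhat : Ωs → Measure V) (t : Fin J → Fin T) (α : Fin T → V)
    (Ws : Fin T → M2) (Ss : Fin J → M2) (τ ε : Fin J → Ωs → V)
    (ahat : Fin T → Ωs → V) (Whts : Fin T → Ωs → M2) (j : Fin J) (ω : Ωs) : V :=
  ahat (t j) ω + (Whts (t j) ω).mulVec
    (postMean (Fhat ω) (PsiHat t Ss Whts j ω) (Zhat t α Ws Ss τ ε ahat Whts j ω))

/-- `‖χ̂ - χ₀‖_∞`. -/
def chiDist (α : Fin T → V) (Ws : Fin T → M2) (ahat : Fin T → Ωs → V)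
    (Whts : Fin T → Ωs → M2) (ω : Ωs) : ℝ :=
  ⨆ u, max (ninf (ahat u ω - α u)) (opN (Whts u ω - Ws u))

/-- Gradient of the net welfare impact, `(∇w)_j = η_j WTP_j - μ G_j`. -/
def trueGrad (t : Fin J → Fin T) (α : Fin T → V) (Ws : Fin T → M2)
    (τ : Fin J → Ωs → V) (η : Fin J → ℝ) (μv : ℝ) (ω : Ωs) : Fin J → ℝ :=
  fun j => η j * theta t α Ws τ j ω 0 - μv * theta t α Ws τ j ω 1

/-- Sample plug-in gradient `(∇ŵ)_j = η_j WTP̂_j - μ Ĝ_j`. -/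
def plugGrad (t : Fin J → Fin T) (α : Fin T → V) (Ws : Fin T → M2) (Ss : Fin J → M2)
    (τ ε : Fin J → Ωs → V) (η : Fin J → ℝ) (μv : ℝ) (ω : Ωs) : Fin J → ℝ :=
  fun j => η j * obsY t α Ws Ss τ ε j ω 0 - μv * obsY t α Ws Ss τ ε j ω 1

/-- Oracle gradient `(∇w^*)_j = η_j WTP_j^* - μ G_j^*`. -/
def oracleGrad (F0 : Measure V) (t : Fin J → Fin T) (α : Fin T → V) (Ws : Fin T → M2)
    (Ss : Fin J → M2) (τ ε : Fin J → Ωs → V) (η : Fin J → ℝ) (μv : ℝ) (ω : Ωs) :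
    Fin J → ℝ :=
  fun j => η j * thetaStar F0 t α Ws Ss τ ε j ω 0 - μv * thetaStar F0 t α Ws Ss τ ε j ω 1

/-- Empirical Bayes gradient `(∇ŵ^*)_j = η_j WTP̂_j^* - μ Ĝ_j^*`. -/
def ebGrad (Fhat : Ωs → Measure V) (t : Fin J → Fin T) (α : Fin T → V) (Ws : Fin T → M2)
    (Ss : Fin J → M2) (τ ε : Fin J → Ωs → V) (ahat : Fin T → Ωs → V)
    (Whts : Fin T → Ωs → M2) (η : Fin J → ℝ) (μv : ℝ) (ω : Ωs) : Fin J → ℝ :=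
  fun j => η j * thetaHatStar Fhat t α Ws Ss τ ε ahat Whts j ω 0
    - μv * thetaHatStar Fhat t α Ws Ss τ ε ahat Whts j ω 1

/-- The basic data-generating process: `τ_j` i.i.d. from `F₀` (mean zero, identity covariance,
supported in the rectangle — Assumption 1), `ε_j` i.i.d. standard bivariate Gaussian, all of
`τ_1,…,τ_J,ε_1,…,ε_J` jointly independent, and positive (semi)definiteness of the
square-root scale and noise matrices. -/
structure Model [MeasurableSpace Ωs] (P : Measure Ωs) (t : Fin J → Fin T)
    (F0 : Measure V) (τ ε : Fin J → Ωs → V) (α : Fin T → V) (Ws : Fin T → M2)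
    (Ss : Fin J → M2) (swl swh sgl sgh : ℝ) : Prop where
  probP : IsProbabilityMeasure P
  probF : IsProbabilityMeasure F0
  meas_tau : ∀ j, Measurable (τ j)
  meas_eps : ∀ j, Measurable (ε j)
  indep : iIndepFun
    (Sum.elim τ ε) P
  law_tau : ∀ j, Measure.map (τ j) P = F0
  law_eps : ∀ j, Measure.map (ε j) P = stdGauss2
  mean0 : ∫ v, v ∂F0 = 0
  covId : ∀ i k : Fin 2, ∫ v, v i * v k ∂F0 = if i = k then 1 else 0
  suppF : ∀ᵐ v ∂F0, v 0 ∈ Set.Icc swl swh ∧ v 1 ∈ Set.Icc sgl sgh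
  Ws_psd : ∀ u, (Ws u).PosSemidef
  Omega_pd : ∀ u, (Ws u * Ws u).PosDef
  Ss_psd : ∀ j, (Ss j).PosSemidef
  Sigma_pd : ∀ j, (Ss j * Ss j).PosDef

/-- Assumption 3: `c̲ I₂ ⪯ Ω_t ⪯ c̄ I₂` for all types `t`. -/
structure Assump3 (Ws : Fin T → M2) (cl cu : ℝ) : Prop where
  lower : ∀ u, LoewnerLE (cl • (1 : M2)) (Ws u * Ws u)
  upper : ∀ u, LoewnerLE (Ws u * Ws u) (cu • (1 : M2))

/-- Assumption 4 on the location-scale estimators. -/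
structure Assump4 [MeasurableSpace Ωs] (P : Measure Ωs) (t : Fin J → Fin T)
    (α : Fin T → V) (Ws : Fin T → M2) (Ss : Fin J → M2) (τ ε : Fin J → Ωs → V)
    (ahat : Fin T → Ωs → V) (Whts : Fin T → Ωs → M2)
    (cl cu ml mu kl ku C1 C2 : ℝ) : Prop where
  what_psd : ∀ u ω, (Whts u ω).PosSemidef
  what_lower : ∀ u ω, LoewnerLE (cl • (1 : M2)) (Whts u ω * Whts u ω)
  what_upper : ∀ u ω, LoewnerLE (Whts u ω * Whts u ω) (cu • (1 : M2))
  count_lower : ∀ u, ml * J ≤ ((Finset.univ.filter fun j => t j = u).card : ℝ)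
  count_upper : ∀ u, ((Finset.univ.filter fun j => t j = u).card : ℝ) ≤ mu * J
  psi_lower : ∀ j, LoewnerLE (kl • (1 : M2)) (PsiM t Ws Ss j)
  psi_upper : ∀ j, LoewnerLE (PsiM t Ws Ss j) (ku • (1 : M2))
  meas_ahat : ∀ u,
    Measurable[MeasurableSpace.comap (Yall t α Ws Ss τ ε) inferInstance] (ahat u)
  meas_What : ∀ u,
    Measurable[MeasurableSpace.comap (Yall t α Ws Ss τ ε) inferInstance] (Whts u)
  chi_tail : P {ω | chiDist α Ws ahat Whts ω > C1 * Real.sqrt (Real.log J / J)}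
    ≤ ENNReal.ofReal (C2 / (J : ℝ) ^ 2)

/-- Assumption 5 on the estimated prior `F̂_J` (approximate NPMLE with bounded support). -/
structure Assump5 [MeasurableSpace Ωs] (P : Measure Ωs) (t : Fin J → Fin T)
    (α : Fin T → V) (Ws : Fin T → M2) (Ss : Fin J → M2) (τ ε : Fin J → Ωs → V)
    (ahat : Fin T → Ωs → V) (Whts : Fin T → Ωs → M2) (Fhat : Ωs → Measure V) : Prop where
  meas : Measurable[MeasurableSpace.comap (Yall t α Ws Ss τ ε) inferInstance] Fhat
  prob : ∀ ω, IsProbabilityMeasure (Fhat ω)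
  nearOpt : ∀ᵐ ω ∂P,
    sSup {r : ℝ | ∃ F : Measure V, IsProbabilityMeasure F ∧
        r = (1 / (J : ℝ)) * ∑ j, Real.log
          (∫ x, gk (PsiHat t Ss Whts j ω) (Zhat t α Ws Ss τ ε ahat Whts j ω - x) ∂F)}
      - kappaJ J
    ≤ (1 / (J : ℝ)) * ∑ j, Real.log
        (∫ x, gk (PsiHat t Ss Whts j ω) (Zhat t α Ws Ss τ ε ahat Whts j ω - x) ∂(Fhat ω))
  suppIn : ∀ᵐ ω ∂P,
    (Fhat ω) {x : V | n2 x ≤ ⨆ j, max (n2 (Zhat t α Ws Ss τ ε ahat Whts j ω)) 1}ᶜ = 0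


/-!
Write `p τ = exp (-½ q τ)` with `q τ = (τ - z)ᵀ Ψ⁻¹ (τ - z)` and `g = ∫ p dF`. Then `f = c g` with
`c = det (2πΨ)^{-1/2}`, so the logarithm in (a) and (b) is `log (1 / g²)`; moreover
`∇f = c ∫ p Ψ⁻¹ (τ - z) dF` and `Ψ + Ψ (∇²f / f) Ψ = g⁻¹ ∫ p (τ - z)(τ - z)ᵀ dF`.
Because `-p log p = ½ q p`, Jensen's inequality for the concave function `x ↦ -x log x` gives
`∫ q p dF ≤ g log (1 / g²)`. For positive definite `Ψ` one has `|Ψ⁻¹ v|² ≤ ‖Ψ⁻¹‖_F vᵀΨ⁻¹v` and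
`|v|² ≤ ‖Ψ‖_F vᵀΨ⁻¹v`, so Cauchy–Schwarz yields (a), and (b) follows since the Frobenius norm of a
positive semidefinite matrix is at most its trace. Parts (c) and (d) are (a) and (b) combined with
the monotonicity of `s ↦ s^k log (1/s)` on `(0, e^{-1/k}]`, for `k = 2` and `k = 1`.
-/

theorem mul_exp_neg_half_mul_le_two (x : ℝ) : x * exp (-(1 / 2) * x) ≤ 2 := by
  rw [show -(1 / 2) * x = -(x / 2) by ring, exp_neg, ← div_eq_mul_inv, div_le_iff₀ (exp_pos _)]
  linarith [add_one_le_exp (x / 2), exp_pos (x / 2)]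

theorem two_pi_mul_le_inv_of_lt {ρ a : ℝ} (ha : 0 < a) (hρ : ρ < 1 / (2 * π * a)) :
    2 * π * ρ ≤ a⁻¹ := by
  rw [lt_div_iff₀ (by positivity)] at hρ
  rw [← one_div, le_div_iff₀ ha]
  linarith

/-- `s ↦ s ^ k * log s⁻¹` increases on `(0, exp (-1/k)]`, which settles the case `g ≤ r`. -/
theorem pow_mul_log_inv_le_max_pow_mul_log_inv {k : ℕ} (hk : 0 < k) {g r : ℝ} (hg : 0 < g)
    (hr : 0 < r) (hrk : r ≤ exp (-(k : ℝ)⁻¹)) :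
    g ^ k * log g⁻¹ ≤ max g r ^ k * log r⁻¹ := by
  rcases le_total g r with hgr | hrg
  · rw [max_eq_right hgr]
    have hk' : (0 : ℝ) < k := by exact_mod_cast hk
    have hlog_r : (k : ℝ)⁻¹ ≤ log r⁻¹ := by
      rw [log_inv, le_neg]
      simpa using log_le_log hr hrk
    have hpow : g ^ k ≤ r ^ k := pow_le_pow_left₀ hg.le hgr k
    have hratio : k * log (r / g) ≤ (r / g) ^ k - 1 := by
      rw [← log_pow]; exact log_le_sub_one_of_pos (by positivity)
    have hsplit : log g⁻¹ = log (r / g) + log r⁻¹ := by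
      rw [log_div hr.ne' hg.ne', log_inv, log_inv]; ring
    have hmul : g ^ k * (k * log (r / g)) ≤ r ^ k - g ^ k := by
      calc g ^ k * (k * log (r / g)) ≤ g ^ k * ((r / g) ^ k - 1) :=
            mul_le_mul_of_nonneg_left hratio (by positivity)
        _ = r ^ k - g ^ k := by
          rw [div_pow, mul_sub, mul_div_cancel₀ _ (pow_ne_zero _ hg.ne'), mul_one]
    have hdiff : (r ^ k - g ^ k) * (k : ℝ)⁻¹ ≤ (r ^ k - g ^ k) * log r⁻¹ :=
      mul_le_mul_of_nonneg_left hlog_r (sub_nonneg.2 hpow)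
    have hmul' : g ^ k * log (r / g) ≤ (r ^ k - g ^ k) * (k : ℝ)⁻¹ := by
      rw [le_mul_inv_iff₀ hk']; linarith
    rw [hsplit]; nlinarith
  · rw [max_eq_left hrg]
    exact mul_le_mul_of_nonneg_left (log_le_log (by positivity) (inv_anti₀ hr hrg))
      (by positivity)

section Matrices

variable {n : Type*} [Fintype n]

theorem dotProduct_mulVec_le_frobenius_mul (B : Matrix n n ℝ) (v : n → ℝ) :
    v ⬝ᵥ B *ᵥ v ≤ √(∑ i, ∑ j, B i j ^ 2) * (v ⬝ᵥ v) := by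
  have hv : √(∑ i, ∑ j, (v i * v j) ^ 2) = v ⬝ᵥ v := by
    rw [show ∑ i, ∑ j, (v i * v j) ^ 2 = (v ⬝ᵥ v) ^ 2 by
      simp only [dotProduct, sq, Finset.sum_mul_sum]; ring_nf]
    exact sqrt_sq (dotProduct_self_star_nonneg v)
  calc v ⬝ᵥ B *ᵥ v = ∑ ij : n × n, B ij.1 ij.2 * (v ij.1 * v ij.2) := by
        simp only [dotProduct, mulVec, Finset.mul_sum, Fintype.sum_prod_type]
        refine Finset.sum_congr rfl fun i _ => Finset.sum_congr rfl fun j _ => by ring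
    _ ≤ √(∑ ij : n × n, B ij.1 ij.2 ^ 2) * √(∑ ij : n × n, (v ij.1 * v ij.2) ^ 2) :=
        Real.sum_mul_le_sqrt_mul_sqrt _ _ _
    _ = √(∑ i, ∑ j, B i j ^ 2) * (v ⬝ᵥ v) := by
        rw [← hv, Fintype.sum_prod_type, Fintype.sum_prod_type]

/-- Cauchy–Schwarz for the form of `B` gives `|Bw|⁴ ≤ (w ⬝ Bw) (Bw ⬝ B(Bw))`, and the last factor is
at most `‖B‖_F |Bw|²`. -/
theorem PosSemidef.mulVec_dotProduct_mulVec_le {B : Matrix n n ℝ} (hB : B.PosSemidef)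
    (w : n → ℝ) : B *ᵥ w ⬝ᵥ B *ᵥ w ≤ √(∑ i, ∑ j, B i j ^ 2) * (w ⬝ᵥ B *ᵥ w) := by
  set v := B *ᵥ w
  have hsymm : B.IsSymm := by simpa using hB.1
  have hvv : v ⬝ᵥ v = w ⬝ᵥ B *ᵥ v := by
    rw [dotProduct_mulVec, ← mulVec_transpose, hsymm.eq]
    exact dotProduct_comm _ _
  have hCS := (Matrix.toBilin' B).apply_mul_apply_le_of_forall_zero_le
    (fun x => by simpa [toBilin'_apply'] using hB.dotProduct_mulVec_nonneg x) w v
  simp only [toBilin'_apply'] at hCS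
  have hvBv := dotProduct_mulVec_le_frobenius_mul B v
  have hQ : 0 ≤ w ⬝ᵥ B *ᵥ w := hB.dotProduct_mulVec_nonneg w
  have hS : 0 ≤ v ⬝ᵥ v := dotProduct_self_star_nonneg v
  rw [← hvv] at hCS
  rcases hS.eq_or_lt with h0 | hpos
  · rw [← h0]; positivity
  · refine le_of_mul_le_mul_left ?_ hpos
    nlinarith [mul_le_mul_of_nonneg_left hvBv hQ]

theorem PosDef.dotProduct_self_le_frobenius_mul {Ψ : Matrix n n ℝ} [DecidableEq n]
    (hΨ : Ψ.PosDef) (x : n → ℝ) : x ⬝ᵥ x ≤ √(∑ i, ∑ j, Ψ i j ^ 2) * (x ⬝ᵥ Ψ⁻¹ *ᵥ x) := by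
  have hx : Ψ *ᵥ (Ψ⁻¹ *ᵥ x) = x := by
    rw [mulVec_mulVec, mul_nonsing_inv _ (isUnit_iff_ne_zero.2 hΨ.det_pos.ne'), one_mulVec]
  simpa [hx, dotProduct_comm] using PosSemidef.mulVec_dotProduct_mulVec_le hΨ.posSemidef (Ψ⁻¹ *ᵥ x)

theorem sqrt_sum_sq_le_trace {T : Matrix n n ℝ} (hdiag : ∀ k, 0 ≤ T k k)
    (hT : ∀ k l, T k l ^ 2 ≤ T k k * T l l) : √(∑ k, ∑ l, T k l ^ 2) ≤ T.trace := by
  have htr : 0 ≤ T.trace := Finset.sum_nonneg fun k _ => hdiag k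
  calc √(∑ k, ∑ l, T k l ^ 2) ≤ √(T.trace ^ 2) := by
        refine sqrt_le_sqrt ?_
        rw [trace, sq, Finset.sum_mul_sum]
        exact Finset.sum_le_sum fun k _ => Finset.sum_le_sum fun l _ => hT k l
    _ = T.trace := sqrt_sq htr

theorem abs_mul_apply_le_dotProduct_self (x : n → ℝ) (i j : n) :
    |x i * x j| ≤ x ⬝ᵥ x := by
  have hsq : ∀ k, x k * x k ≤ x ⬝ᵥ x := fun k =>
    Finset.single_le_sum (f := fun k => x k * x k) (fun k _ => mul_self_nonneg (x k))
      (Finset.mem_univ k)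
  rw [abs_mul]
  nlinarith [hsq i, hsq j, abs_mul_abs_self (x i), abs_mul_abs_self (x j), abs_nonneg (x i),
    abs_nonneg (x j), sq_nonneg (|x i| - |x j|)]

theorem abs_apply_le_one_add_dotProduct_self (x : n → ℝ) (i : n) :
    |x i| ≤ 1 + x ⬝ᵥ x := by
  have := abs_mul_apply_le_dotProduct_self x i i
  rw [abs_mul, abs_mul_abs_self] at this
  nlinarith [sq_nonneg (|x i| - 1), abs_mul_abs_self (x i)]

end Matrices

section WeightedIntegrals

variable {α : Type*} [MeasurableSpace α] {μ : Measure α} {ι : Type*} [Fintype ι] {p Q : α → ℝ}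

theorem integral_matrix_apply {κ : Type*} [Fintype κ] {f : α → Matrix ι κ ℝ}
    (hf : ∀ k l, Integrable (fun a => f a k l) μ) (k : ι) (l : κ) :
    (∫ a, f a ∂μ) k l = ∫ a, f a k l ∂μ := by
  have hrow := eval_integral (f := fun a => (f a : ι → κ → ℝ)) (μ := μ)
    (fun k => integrable_pi_iff.2 fun l => hf k l) k
  rw [← eval_integral (hf k) l, ← hrow]
  rfl

/-- Conjugation by an invertible matrix is a continuous linear equivalence, so it commutes with the
Bochner integral whether or not `f` is integrable. -/
theorem mul_integral_mul_self [DecidableEq ι] {P : Matrix ι ι ℝ} (hP : IsUnit P.det)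
    (f : α → Matrix ι ι ℝ) : P * (∫ a, f a ∂μ) * P = ∫ a, P * f a * P ∂μ := by
  let L : Matrix ι ι ℝ ≃ₗ[ℝ] Matrix ι ι ℝ := LinearEquiv.ofLinearMap
    (LinearMap.mulLeftRight ℝ (P, P)) (LinearMap.mulLeftRight ℝ (P⁻¹, P⁻¹))
    (by ext1 X; simp [Matrix.mul_assoc, nonsing_inv_mul P hP, mul_nonsing_inv_cancel_left P _ hP])
    (by ext1 X; simp [Matrix.mul_assoc, mul_nonsing_inv P hP, nonsing_inv_mul_cancel_left P _ hP])
  exact (L.toContinuousLinearEquiv.integral_comp_comm f).symm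

theorem sq_integral_mul_mul_le {φ ψ : α → ℝ} (hp : ∀ a, 0 ≤ p a)
    (hφ : Integrable (fun a => φ a * φ a * p a) μ) (hφψ : Integrable (fun a => φ a * ψ a * p a) μ)
    (hψ : Integrable (fun a => ψ a * ψ a * p a) μ) :
    (∫ a, φ a * ψ a * p a ∂μ) ^ 2 ≤ (∫ a, φ a * φ a * p a ∂μ) * ∫ a, ψ a * ψ a * p a ∂μ := by
  have hquad : ∀ t : ℝ, 0 ≤ (∫ a, φ a * φ a * p a ∂μ) * (t * t)
      + 2 * (∫ a, φ a * ψ a * p a ∂μ) * t + ∫ a, ψ a * ψ a * p a ∂μ := fun t => by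
    have hexpand : (fun a => (t * φ a + ψ a) ^ 2 * p a) = fun a =>
        (t * t) * (φ a * φ a * p a) + (2 * t) * (φ a * ψ a * p a) + ψ a * ψ a * p a := by
      funext a; ring
    have hnonneg : 0 ≤ ∫ a, (t * φ a + ψ a) ^ 2 * p a ∂μ :=
      integral_nonneg fun a => mul_nonneg (sq_nonneg _) (hp a)
    rw [hexpand, integral_add (f := fun a => t * t * (φ a * φ a * p a) + 2 * t * (φ a * ψ a * p a))
      ((hφ.const_mul _).add (hφψ.const_mul _)) hψ,
      integral_add (hφ.const_mul _) (hφψ.const_mul _), integral_const_mul,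
      integral_const_mul] at hnonneg
    linarith
  have := discrim_le_zero hquad
  rw [discrim] at this
  linarith

theorem dotProduct_integral_smul_self_le {u : α → ι → ℝ} (hp : ∀ a, 0 ≤ p a)
    (hpi : Integrable p μ) (hu : ∀ i, Integrable (fun a => u a i * p a) μ)
    (huu : ∀ i, Integrable (fun a => u a i * u a i * p a) μ) :
    (∫ a, p a • u a ∂μ) ⬝ᵥ (∫ a, p a • u a ∂μ) ≤ (∫ a, p a ∂μ) * ∫ a, (u a ⬝ᵥ u a) * p a ∂μ := by
  have hcomp : ∀ i, (∫ a, p a • u a ∂μ) i = ∫ a, u a i * p a ∂μ := fun i => by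
    rw [eval_integral fun j => by simpa [mul_comm] using hu j]
    simp [mul_comm]
  have hCS : ∀ i, (∫ a, u a i * p a ∂μ) ^ 2 ≤ (∫ a, u a i * u a i * p a ∂μ) * ∫ a, p a ∂μ :=
    fun i => by
      simpa using sq_integral_mul_mul_le (ψ := fun _ => 1) hp (huu i) (by simpa using hu i)
        (by simpa using hpi)
  simp only [dotProduct, hcomp, Finset.sum_mul]
  rw [integral_finsetSum _ fun i _ => huu i, Finset.mul_sum]
  exact Finset.sum_le_sum fun i _ => by nlinarith [hCS i]

theorem frobenius_integral_smul_vecMulVec_le {w : α → ι → ℝ} (hp : ∀ a, 0 ≤ p a)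
    (hw : ∀ k l, Integrable (fun a => w a k * w a l * p a) μ) :
    √(∑ k, ∑ l, (∫ a, p a • vecMulVec (w a) (w a) ∂μ) k l ^ 2)
      ≤ ∫ a, (w a ⬝ᵥ w a) * p a ∂μ := by
  have hentry : ∀ k l, (∫ a, p a • vecMulVec (w a) (w a) ∂μ) k l = ∫ a, w a k * w a l * p a ∂μ := by
    intro k l
    rw [integral_matrix_apply fun k l => by simpa [vecMulVec_apply, mul_comm] using hw k l]
    simp [vecMulVec_apply, mul_comm]
  have htrace : (∫ a, p a • vecMulVec (w a) (w a) ∂μ).trace = ∫ a, (w a ⬝ᵥ w a) * p a ∂μ := by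
    simp only [trace, diag, hentry, dotProduct, Finset.sum_mul]
    exact (integral_finsetSum _ fun k _ => hw k k).symm
  rw [← htrace]
  refine sqrt_sum_sq_le_trace (fun k => ?_) fun k l => ?_
  · rw [hentry]; exact integral_nonneg fun a => mul_nonneg (mul_self_nonneg _) (hp a)
  · simp only [hentry]; exact sq_integral_mul_mul_le hp (hw k k) (hw k l) (hw l l)

theorem integrable_mul_exp_neg_half [IsFiniteMeasure μ] {φ : α → ℝ} {K : ℝ}
    (hQ : ∀ a, 0 ≤ Q a) (hQm : AEStronglyMeasurable Q μ) (hφm : AEStronglyMeasurable φ μ)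
    (hφ : ∀ a, |φ a| ≤ K * (1 + Q a)) :
    Integrable (fun a => φ a * exp (-(1 / 2) * Q a)) μ := by
  refine Integrable.of_bound (hφm.mul (by fun_prop)) (3 * K) (.of_forall fun a => ?_)
  have hp : exp (-(1 / 2) * Q a) ≤ 1 := exp_le_one_iff.2 (by nlinarith [hQ a])
  have hK : 0 ≤ K := nonneg_of_mul_nonneg_left ((abs_nonneg _).trans (hφ a)) (by linarith [hQ a])
  rw [norm_mul, Real.norm_eq_abs, Real.norm_of_nonneg (exp_pos _).le]
  calc |φ a| * exp (-(1 / 2) * Q a) ≤ K * (1 + Q a) * exp (-(1 / 2) * Q a) :=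
        mul_le_mul_of_nonneg_right (hφ a) (exp_pos _).le
    _ = K * (exp (-(1 / 2) * Q a) + Q a * exp (-(1 / 2) * Q a)) := by ring
    _ ≤ K * (1 + 2) := by gcongr; exact mul_exp_neg_half_mul_le_two _
    _ = 3 * K := by ring

theorem integrable_exp_neg_half [IsFiniteMeasure μ] (hQ : ∀ a, 0 ≤ Q a)
    (hQm : AEStronglyMeasurable Q μ) : Integrable (fun a => exp (-(1 / 2) * Q a)) μ := by
  simpa using integrable_mul_exp_neg_half (φ := 1) (K := 1) hQ hQm aestronglyMeasurable_const
    fun a => by simp [hQ a]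

theorem integrable_mul_self_exp_neg_half [IsFiniteMeasure μ] (hQ : ∀ a, 0 ≤ Q a)
    (hQm : AEStronglyMeasurable Q μ) : Integrable (fun a => Q a * exp (-(1 / 2) * Q a)) μ :=
  integrable_mul_exp_neg_half (K := 1) hQ hQm hQm fun a => by rw [abs_of_nonneg (hQ a)]; linarith

variable [IsProbabilityMeasure μ]

theorem integral_exp_neg_half_pos (hQ : ∀ a, 0 ≤ Q a) (hQm : AEStronglyMeasurable Q μ) :
    0 < ∫ a, exp (-(1 / 2) * Q a) ∂μ :=
  integral_exp_pos (integrable_exp_neg_half hQ hQm)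

/-- Since `negMulLog (exp (-Q/2)) = Q exp (-Q/2) / 2`, this is Jensen's inequality for the concave
function `negMulLog`. -/
theorem integral_mul_exp_neg_half_le (hQ : ∀ a, 0 ≤ Q a) (hQm : AEStronglyMeasurable Q μ) :
    ∫ a, Q a * exp (-(1 / 2) * Q a) ∂μ
      ≤ (∫ a, exp (-(1 / 2) * Q a) ∂μ) * log (1 / (∫ a, exp (-(1 / 2) * Q a) ∂μ) ^ 2) := by
  set g := ∫ a, exp (-(1 / 2) * Q a) ∂μ
  have hnml : ∀ a, negMulLog (exp (-(1 / 2) * Q a)) = (1 / 2) * (Q a * exp (-(1 / 2) * Q a)) :=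
    fun a => by rw [negMulLog, log_exp]; ring
  have hJensen := concaveOn_negMulLog.le_map_integral continuous_negMulLog.continuousOn
    isClosed_Ici (.of_forall fun a => (exp_pos (-(1 / 2) * Q a)).le)
    (integrable_exp_neg_half hQ hQm) (by simpa only [Function.comp_def, hnml] using
      (integrable_mul_self_exp_neg_half hQ hQm).const_mul (1 / 2))
  simp only [hnml, integral_const_mul] at hJensen
  rw [negMulLog] at hJensen
  rw [show log (1 / g ^ 2) = -(2 * log g) by rw [one_div, log_inv, log_pow]; push_cast; ring]
  linarith

theorem integral_mul_exp_neg_half_le_of_le {X : α → ℝ} {K : ℝ} (hK : 0 ≤ K)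
    (hQ : ∀ a, 0 ≤ Q a) (hQm : AEStronglyMeasurable Q μ)
    (hX : Integrable (fun a => X a * exp (-(1 / 2) * Q a)) μ) (hXQ : ∀ a, X a ≤ K * Q a) :
    ∫ a, X a * exp (-(1 / 2) * Q a) ∂μ
      ≤ K * ((∫ a, exp (-(1 / 2) * Q a) ∂μ) * log (1 / (∫ a, exp (-(1 / 2) * Q a) ∂μ) ^ 2)) := by
  calc ∫ a, X a * exp (-(1 / 2) * Q a) ∂μ ≤ ∫ a, K * (Q a * exp (-(1 / 2) * Q a)) ∂μ :=
        integral_mono hX ((integrable_mul_self_exp_neg_half hQ hQm).const_mul K) fun a => by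
          rw [← mul_assoc]; exact mul_le_mul_of_nonneg_right (hXQ a) (exp_pos _).le
    _ ≤ _ := by
        rw [integral_const_mul]
        exact mul_le_mul_of_nonneg_left (integral_mul_exp_neg_half_le hQ hQm) hK

end WeightedIntegrals

section GaussianMixture

/-- `gk Ψ x = exp (-(1 / 2) * mahalanobisSq Ψ x)` holds by `rfl`; this is how the lemmas about
`exp (-(1 / 2) * Q a)` apply to the kernel. -/
def mahalanobisSq (Ψ : M2) (x : V) : ℝ := x ⬝ᵥ Ψ⁻¹ *ᵥ x

variable {Ψ : M2}

theorem gk_sub_comm (Ψ : M2) (z τ : V) : gk Ψ (z - τ) = gk Ψ (τ - z) := by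
  rw [gk, gk, ← neg_sub τ z, mulVec_neg, dotProduct_neg, neg_dotProduct, neg_neg]

theorem mahalanobisSq_nonneg (hΨ : Ψ.PosDef) (x : V) : 0 ≤ mahalanobisSq Ψ x :=
  hΨ.inv.posSemidef.dotProduct_mulVec_nonneg x

theorem continuous_mahalanobisSq (Ψ : M2) : Continuous (mahalanobisSq Ψ) :=
  continuous_id.dotProduct (continuous_const.matrix_mulVec continuous_id)

theorem dotProduct_self_le_frobN_mul_mahalanobisSq (hΨ : Ψ.PosDef) (x : V) :
    x ⬝ᵥ x ≤ frobN Ψ * mahalanobisSq Ψ x :=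
  PosDef.dotProduct_self_le_frobenius_mul hΨ x

theorem inv_mulVec_dotProduct_le_frobN_mul_mahalanobisSq (hΨ : Ψ.PosDef) (x : V) :
    Ψ⁻¹ *ᵥ x ⬝ᵥ Ψ⁻¹ *ᵥ x ≤ frobN Ψ⁻¹ * mahalanobisSq Ψ x :=
  PosSemidef.mulVec_dotProduct_mulVec_le hΨ.inv.posSemidef x

theorem n2_sq (v : V) : n2 v ^ 2 = v ⬝ᵥ v := by
  rw [n2, sq_sqrt (by positivity)]
  simp [dotProduct, Fin.sum_univ_two, sq]

theorem frobN_smul (c : ℝ) (A : M2) : frobN (c • A) = |c| * frobN A := by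
  simp only [frobN, Matrix.smul_apply, smul_eq_mul, mul_pow, ← Finset.mul_sum]
  rw [sqrt_mul (sq_nonneg c), sqrt_sq_eq_abs]

variable {F : Measure V} [IsFiniteMeasure F]

theorem integrable_mul_gk (hΨ : Ψ.PosDef) (z : V) {φ : V → ℝ} (hφ : Continuous φ) {K : ℝ}
    (hK : ∀ τ, |φ τ| ≤ K * (1 + mahalanobisSq Ψ (τ - z))) :
    Integrable (fun τ => φ τ * gk Ψ (τ - z)) F :=
  integrable_mul_exp_neg_half (fun τ => mahalanobisSq_nonneg hΨ (τ - z))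
    ((continuous_mahalanobisSq Ψ).comp (continuous_sub_right z)).aestronglyMeasurable
    hφ.aestronglyMeasurable hK

theorem integrable_gk (hΨ : Ψ.PosDef) (z : V) :
    Integrable (fun τ => gk Ψ (τ - z)) F :=
  integrable_exp_neg_half (fun τ => mahalanobisSq_nonneg hΨ (τ - z))
    ((continuous_mahalanobisSq Ψ).comp (continuous_sub_right z)).aestronglyMeasurable

section Dominated

variable (hΨ : Ψ.PosDef) (z : V) {x : V → V} (hx : Continuous x) {K : ℝ} (hK0 : 0 ≤ K)
  (hK : ∀ τ, x τ ⬝ᵥ x τ ≤ K * mahalanobisSq Ψ (τ - z))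
include hΨ hx hK0 hK

theorem integrable_apply_mul_gk (i : Fin 2) : Integrable (fun τ => x τ i * gk Ψ (τ - z)) F :=
  integrable_mul_gk hΨ z ((continuous_apply i).comp hx) (K := 1 + K) fun τ => by
    nlinarith [abs_apply_le_one_add_dotProduct_self (x τ) i, hK τ,
      mahalanobisSq_nonneg hΨ (τ - z)]

theorem integrable_apply_mul_apply_mul_gk (i j : Fin 2) :
    Integrable (fun τ => x τ i * x τ j * gk Ψ (τ - z)) F :=
  integrable_mul_gk hΨ z (((continuous_apply i).comp hx).mul ((continuous_apply j).comp hx))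
    (K := K) fun τ => by
      nlinarith [abs_mul_apply_le_dotProduct_self (x τ) i j, hK τ]

theorem integrable_dotProduct_self_mul_gk :
    Integrable (fun τ => x τ ⬝ᵥ x τ * gk Ψ (τ - z)) F :=
  integrable_mul_gk hΨ z (hx.dotProduct hx) (K := K) fun τ => by
    have : 0 ≤ x τ ⬝ᵥ x τ := dotProduct_self_star_nonneg (x τ)
    rw [abs_of_nonneg this]
    nlinarith [hK τ]

end Dominated

end GaussianMixture

section MixtureBounds

variable {F : Measure V} {Ψ : M2}

theorem gconst_pos (hΨ : Ψ.PosDef) : 0 < gconst Ψ :=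
  inv_pos.2 (sqrt_pos.2 (by have := hΨ.det_pos; positivity))

theorem gconst_sq (hΨ : Ψ.PosDef) : gconst Ψ ^ 2 = ((2 * π) ^ 2 * Ψ.det)⁻¹ := by
  rw [gconst, inv_pow, sq_sqrt (by have := hΨ.det_pos; positivity)]

theorem div_sqrt_det_eq_gconst_mul (hΨ : Ψ.PosDef) (ρ : ℝ) :
    ρ / √Ψ.det = gconst Ψ * (2 * π * ρ) := by
  have := sqrt_pos.2 hΨ.det_pos
  rw [gconst, sqrt_mul (by positivity), sqrt_sq (by positivity)]
  field_simp

theorem mixD_eq (F : Measure V) (Ψ : M2) (z : V) :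
    mixD F Ψ z = gconst Ψ * ∫ τ, gk Ψ (τ - z) ∂F := by
  simp only [mixD, gk_sub_comm]
  exact integral_const_mul _ _

theorem mixGrad_eq (F : Measure V) (Ψ : M2) (z : V) :
    mixGrad F Ψ z = gconst Ψ • ∫ τ, gk Ψ (τ - z) • Ψ⁻¹ *ᵥ (τ - z) ∂F := by
  simp only [mixGrad, gk_sub_comm, mul_smul]
  exact integral_smul _ _

theorem mul_mixHess_mul (hΨ : Ψ.PosDef) (F : Measure V) (z : V) :
    Ψ * mixHess F Ψ z * Ψ
      = gconst Ψ • ∫ τ, gk Ψ (τ - z) • (vecMulVec (τ - z) (τ - z) - Ψ) ∂F := by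
  have hunit : IsUnit Ψ.det := isUnit_iff_ne_zero.2 hΨ.det_pos.ne'
  rw [mixHess, mul_integral_mul_self hunit, ← integral_smul]
  congr 1
  funext τ
  rw [Matrix.mul_smul, Matrix.smul_mul, gk_sub_comm, mul_smul]
  simp only [Matrix.mul_sub, Matrix.sub_mul, Matrix.mul_assoc, nonsing_inv_mul Ψ hunit,
    Matrix.mul_one, mul_nonsing_inv_cancel_left Ψ _ hunit]

theorem log_inv_mixD_sq (hΨ : Ψ.PosDef) (z : V) :
    log (1 / ((2 * π) ^ 2 * Ψ.det * mixD F Ψ z ^ 2)) = log (1 / (∫ τ, gk Ψ (τ - z) ∂F) ^ 2) := by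
  have hD : (2 * π) ^ 2 * Ψ.det ≠ 0 := by have := hΨ.det_pos; positivity
  rw [mixD_eq, mul_pow (gconst Ψ), gconst_sq hΨ, ← mul_assoc, mul_inv_cancel₀ hD, one_mul]

variable [IsProbabilityMeasure F]

theorem integral_gk_pos (hΨ : Ψ.PosDef) (z : V) : 0 < ∫ τ, gk Ψ (τ - z) ∂F :=
  integral_exp_neg_half_pos (fun τ => mahalanobisSq_nonneg hΨ (τ - z))
    ((continuous_mahalanobisSq Ψ).comp (continuous_sub_right z)).aestronglyMeasurable

theorem integral_mul_gk_le_of_le (hΨ : Ψ.PosDef) (z : V) {X : V → ℝ} {K : ℝ} (hK : 0 ≤ K)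
    (hX : Integrable (fun τ => X τ * gk Ψ (τ - z)) F)
    (hXQ : ∀ τ, X τ ≤ K * mahalanobisSq Ψ (τ - z)) :
    ∫ τ, X τ * gk Ψ (τ - z) ∂F
      ≤ K * ((∫ τ, gk Ψ (τ - z) ∂F) * log (1 / (∫ τ, gk Ψ (τ - z) ∂F) ^ 2)) :=
  integral_mul_exp_neg_half_le_of_le hK (fun τ => mahalanobisSq_nonneg hΨ (τ - z))
    ((continuous_mahalanobisSq Ψ).comp (continuous_sub_right z)).aestronglyMeasurable hX hXQ

theorem mixD_pos (hΨ : Ψ.PosDef) (z : V) : 0 < mixD F Ψ z := by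
  rw [mixD_eq]
  exact mul_pos (gconst_pos hΨ) (integral_gk_pos hΨ z)

theorem hessian_term_eq (hΨ : Ψ.PosDef) (z : V) :
    Ψ + (mixD F Ψ z)⁻¹ • (Ψ * mixHess F Ψ z * Ψ)
      = (∫ τ, gk Ψ (τ - z) ∂F)⁻¹ • ∫ τ, gk Ψ (τ - z) • vecMulVec (τ - z) (τ - z) ∂F := by
  have hg := (integral_gk_pos (F := F) hΨ z).ne'
  have hc := (gconst_pos hΨ).ne'
  have hw := integrable_apply_mul_apply_mul_gk (F := F) hΨ z (continuous_sub_right z)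
    (sqrt_nonneg _) fun τ => dotProduct_self_le_frobN_mul_mahalanobisSq hΨ (τ - z)
  have hW' : ∀ k l, Integrable (fun τ => gk Ψ (τ - z) * ((τ - z) k * (τ - z) l)) F :=
    fun k l => by simpa only [mul_comm] using hw k l
  have hW : ∀ k l, Integrable
      (fun τ => (gk Ψ (τ - z) • vecMulVec (τ - z) (τ - z)) k l) F := hW'
  have hWΨ : ∀ k l, Integrable
      (fun τ => (gk Ψ (τ - z) • (vecMulVec (τ - z) (τ - z) - Ψ)) k l) F := fun k l =>
    ((hW' k l).sub ((integrable_gk hΨ z).mul_const (Ψ k l))).congr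
      (.of_forall fun τ => by simp [vecMulVec_apply, mul_sub])
  rw [mixD_eq, mul_mixHess_mul hΨ]
  ext k l
  simp only [Matrix.add_apply, Matrix.smul_apply, smul_eq_mul, integral_matrix_apply hW,
    integral_matrix_apply hWΨ, Matrix.sub_apply, vecMulVec_apply, mul_sub]
  rw [integral_sub (hW' k l) ((integrable_gk hΨ z).mul_const _), integral_mul_const]
  field_simp
  ring

theorem n2_mixGrad_sq_le (hΨ : Ψ.PosDef) (z : V) :
    n2 (mixGrad F Ψ z) ^ 2
      ≤ frobN Ψ⁻¹ * log (1 / ((2 * π) ^ 2 * Ψ.det * mixD F Ψ z ^ 2)) * mixD F Ψ z ^ 2 := by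
  have hucont : Continuous fun τ : V => Ψ⁻¹ *ᵥ (τ - z) :=
    continuous_const.matrix_mulVec (continuous_sub_right z)
  have hu := fun τ => inv_mulVec_dotProduct_le_frobN_mul_mahalanobisSq hΨ (τ - z)
  have hA : 0 ≤ frobN Ψ⁻¹ := sqrt_nonneg _
  have hCS := dotProduct_integral_smul_self_le (μ := F) (fun τ => (exp_pos _).le)
    (integrable_gk hΨ z) (integrable_apply_mul_gk hΨ z hucont hA hu)
    fun i => integrable_apply_mul_apply_mul_gk hΨ z hucont hA hu i i
  have hent := integral_mul_gk_le_of_le (F := F) hΨ z hA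
    (integrable_dotProduct_self_mul_gk hΨ z hucont hA hu) hu
  have hg := (integral_gk_pos (F := F) hΨ z).le
  rw [log_inv_mixD_sq hΨ, mixGrad_eq, mixD_eq, n2_sq, smul_dotProduct, dotProduct_smul]
  simp only [smul_eq_mul]
  calc gconst Ψ * (gconst Ψ * ((∫ τ, gk Ψ (τ - z) • Ψ⁻¹ *ᵥ (τ - z) ∂F)
        ⬝ᵥ ∫ τ, gk Ψ (τ - z) • Ψ⁻¹ *ᵥ (τ - z) ∂F))
      ≤ gconst Ψ ^ 2 * ((∫ τ, gk Ψ (τ - z) ∂F) * (frobN Ψ⁻¹ * ((∫ τ, gk Ψ (τ - z) ∂F)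
          * log (1 / (∫ τ, gk Ψ (τ - z) ∂F) ^ 2)))) := by
        rw [← mul_assoc, ← sq]
        gcongr
        exact hCS.trans (mul_le_mul_of_nonneg_left hent hg)
    _ = _ := by ring

theorem frobN_hessian_term_le (hΨ : Ψ.PosDef) (z : V) :
    frobN (Ψ + (mixD F Ψ z)⁻¹ • (Ψ * mixHess F Ψ z * Ψ))
      ≤ frobN Ψ * log (1 / ((2 * π) ^ 2 * Ψ.det * mixD F Ψ z ^ 2)) := by
  have hw := fun τ => dotProduct_self_le_frobN_mul_mahalanobisSq hΨ (τ - z)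
  have hΨF : 0 ≤ frobN Ψ := sqrt_nonneg _
  have hsecond := frobenius_integral_smul_vecMulVec_le (μ := F) (fun τ => (exp_pos _).le)
    (integrable_apply_mul_apply_mul_gk hΨ z (continuous_sub_right z) hΨF hw)
  have hent := integral_mul_gk_le_of_le (F := F) hΨ z hΨF
    (integrable_dotProduct_self_mul_gk hΨ z (continuous_sub_right z) hΨF hw) hw
  have hg := integral_gk_pos (F := F) hΨ z
  rw [hessian_term_eq hΨ z, frobN_smul, log_inv_mixD_sq hΨ, abs_of_pos (inv_pos.2 hg)]
  calc (∫ τ, gk Ψ (τ - z) ∂F)⁻¹ * frobN (∫ τ, gk Ψ (τ - z) • vecMulVec (τ - z) (τ - z) ∂F)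
      ≤ (∫ τ, gk Ψ (τ - z) ∂F)⁻¹ * (frobN Ψ * ((∫ τ, gk Ψ (τ - z) ∂F)
          * log (1 / (∫ τ, gk Ψ (τ - z) ∂F) ^ 2))) := by
        gcongr
        exact hsecond.trans hent
    _ = _ := by field_simp

theorem mixD_pow_mul_log_le (hΨ : Ψ.PosDef) (z : V) {k : ℕ} (hk : 0 < k) {ρ : ℝ} (hρ : 0 < ρ)
    (hρk : 2 * π * ρ ≤ exp (-(k : ℝ)⁻¹)) :
    mixD F Ψ z ^ k * log (1 / ((2 * π) ^ 2 * Ψ.det * mixD F Ψ z ^ 2))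
      ≤ max (mixD F Ψ z) (ρ / √Ψ.det) ^ k * phiPlus ρ ^ 2 := by
  have hr : 0 < 2 * π * ρ := by positivity
  have hr1 : 2 * π * ρ ≤ 1 := hρk.trans (exp_le_one_iff.2 (by simp))
  have hlog_sq : ∀ s : ℝ, log (1 / s ^ 2) = 2 * log s⁻¹ := fun s => by
    rw [one_div, ← inv_pow, log_pow]; push_cast; ring
  have hφ : phiPlus ρ ^ 2 = 2 * log (2 * π * ρ)⁻¹ := by
    have := log_nonneg ((one_le_inv₀ hr).2 hr1)
    rw [phiPlus, sq_sqrt (by rw [hlog_sq]; positivity), hlog_sq]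
  rw [hφ, log_inv_mixD_sq hΨ, hlog_sq, mixD_eq, div_sqrt_det_eq_gconst_mul hΨ,
    ← mul_max_of_nonneg _ _ (gconst_pos hΨ).le, mul_pow, mul_pow]
  have := pow_mul_log_inv_le_max_pow_mul_log_inv hk (integral_gk_pos (F := F) hΨ z) hr hρk
  have hc := pow_nonneg (gconst_pos hΨ).le k
  nlinarith [mul_le_mul_of_nonneg_left this hc]

theorem n2_mixGrad_div_max_le (hΨ : Ψ.PosDef) (z : V) {ρ : ℝ} (hρ : 0 < ρ)
    (hρe : ρ < 1 / (2 * π * √(exp 1))) :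
    n2 (mixGrad F Ψ z) / max (mixD F Ψ z) (ρ / √Ψ.det) ≤ √(frobN Ψ⁻¹) * phiPlus ρ := by
  have hA : 0 ≤ frobN Ψ⁻¹ := sqrt_nonneg _
  have hM : 0 < max (mixD F Ψ z) (ρ / √Ψ.det) := (mixD_pos hΨ z).trans_le (le_max_left _ _)
  have hL := mixD_pow_mul_log_le (F := F) hΨ z two_pos hρ (by
    rw [Real.exp_neg, show ((2 : ℕ) : ℝ)⁻¹ = 1 / 2 by norm_num, exp_half]
    exact two_pi_mul_le_inv_of_lt (by positivity) hρe)
  rw [div_le_iff₀ hM]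
  refine le_of_pow_le_pow_left₀ two_ne_zero
    (mul_nonneg (mul_nonneg (sqrt_nonneg _) (sqrt_nonneg _)) hM.le) ?_
  rw [mul_pow, mul_pow, sq_sqrt hA]
  nlinarith [n2_mixGrad_sq_le (F := F) hΨ z, mul_le_mul_of_nonneg_left hL hA]

theorem mul_mixD_div_max_le (hΨ : Ψ.PosDef) (z : V) {ρ : ℝ} (hρ : 0 < ρ)
    (hρe : ρ < 1 / (2 * π * exp 1)) {X K : ℝ} (hK : 0 ≤ K)
    (hX : X ≤ K * log (1 / ((2 * π) ^ 2 * Ψ.det * mixD F Ψ z ^ 2))) :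
    X * (mixD F Ψ z / max (mixD F Ψ z) (ρ / √Ψ.det)) ≤ K * phiPlus ρ ^ 2 := by
  have hf := mixD_pos (F := F) hΨ z
  have hL := mixD_pow_mul_log_le (F := F) hΨ z one_pos hρ (by
    simpa [Real.exp_neg] using two_pi_mul_le_inv_of_lt (exp_pos 1) hρe)
  rw [pow_one, pow_one] at hL
  rw [← mul_div_assoc, div_le_iff₀ (hf.trans_le (le_max_left _ _))]
  calc X * mixD F Ψ z
      ≤ K * (mixD F Ψ z * log (1 / ((2 * π) ^ 2 * Ψ.det * mixD F Ψ z ^ 2))) := by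
        nlinarith [mul_le_mul_of_nonneg_right hX hf.le]
    _ ≤ K * (max (mixD F Ψ z) (ρ / √Ψ.det) * phiPlus ρ ^ 2) := mul_le_mul_of_nonneg_left hL hK
    _ = _ := by ring

end MixtureBounds

/-- Lemma SM6.8: score and Hessian bounds for heteroscedastic Gaussian
mixture densities. -/
theorem lem_score_hessian_bounds (F : Measure V) (hF : IsProbabilityMeasure F)
    (Ψ : M2) (hΨ : Ψ.PosDef) (z : V) :
    -- (a)
    ((n2 (mixGrad F Ψ z) / mixD F Ψ z) ^ 2
      ≤ frobN Ψ⁻¹ * Real.log (1 / ((2 * π) ^ 2 * Ψ.det * mixD F Ψ z ^ 2))) ∧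
    -- (b)
    (frobN (Ψ + (mixD F Ψ z)⁻¹ • (Ψ * mixHess F Ψ z * Ψ))
      ≤ frobN Ψ * Real.log (1 / ((2 * π) ^ 2 * Ψ.det * mixD F Ψ z ^ 2))) ∧
    -- (c)
    (∀ ρ : ℝ, 0 < ρ → ρ < 1 / (2 * π * Real.sqrt (Real.exp 1)) →
      n2 (mixGrad F Ψ z) / max (mixD F Ψ z) (ρ / Real.sqrt Ψ.det)
        ≤ Real.sqrt (frobN Ψ⁻¹) * phiPlus ρ) ∧
    -- (d)
    (∀ ρ : ℝ, 0 < ρ → ρ < 1 / (2 * π * Real.exp 1) →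
      ((n2 (mixGrad F Ψ z) / mixD F Ψ z) ^ 2
          * (mixD F Ψ z / max (mixD F Ψ z) (ρ / Real.sqrt Ψ.det))
        ≤ frobN Ψ⁻¹ * phiPlus ρ ^ 2) ∧
      (frobN (Ψ + (mixD F Ψ z)⁻¹ • (Ψ * mixHess F Ψ z * Ψ))
          * (mixD F Ψ z / max (mixD F Ψ z) (ρ / Real.sqrt Ψ.det))
        ≤ frobN Ψ * phiPlus ρ ^ 2)) := by
  have ha : (n2 (mixGrad F Ψ z) / mixD F Ψ z) ^ 2
      ≤ frobN Ψ⁻¹ * log (1 / ((2 * π) ^ 2 * Ψ.det * mixD F Ψ z ^ 2)) := by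
    rw [div_pow, div_le_iff₀ (pow_pos (mixD_pos hΨ z) 2)]
    exact n2_mixGrad_sq_le hΨ z
  have hb := frobN_hessian_term_le (F := F) hΨ z
  exact ⟨ha, hb, fun ρ hρ hρe => n2_mixGrad_div_max_le hΨ z hρ hρe, fun ρ hρ hρe =>
    ⟨mul_mixD_div_max_le hΨ z hρ hρe (sqrt_nonneg _) ha,
      mul_mixD_div_max_le hΨ z hρ hρe (sqrt_nonneg _) hb⟩⟩

end PolicyEB
end
end

section
/- (Anti-concentration of a density at its small values.) Let f be a probability density on Rⁿ of a random vector Z = (Z_1,…,Z_n) with finite second moments. Then for any M > 0 and t > 0: ∫_{Rⁿ} 1{f(z) ≤ t}·f(z) dz ≤ (2M)ⁿ·t + ( Σ_{i=1}^n Var(Z_i) ) / M². In particular, for n = 2, choosing M = t^{−1/4}·(Var(Z_1) + Var(Z_2))^{1/4} yields ∫_{R²} 1{f(z) ≤ t}·f(z) dz ≤ 5·t^{1/2}·(Var(Z_1) + Var(Z_2))^{1/2}. -/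
open MeasureTheory ProbabilityTheory Matrix Real Filter Set
open scoped ENNReal NNReal Classical

noncomputable section

namespace PolicyEB

attribute [local instance] Matrix.normedAddCommGroup Matrix.normedSpace

variable {J T : ℕ} {Ωs : Type}

/-- Lebesgue measure on `ℝⁿ`. -/
def voln (n : ℕ) : Measure (Fin n → ℝ) := Measure.pi fun _ => volume

/-- Mean of the `i`-th coordinate under the density `f`. -/
def densMean (n : ℕ) (f : (Fin n → ℝ) → ℝ) (i : Fin n) : ℝ := ∫ y, y i * f y ∂voln n

/-- Variance of the `i`-th coordinate under the density `f`. -/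
def densVar (n : ℕ) (f : (Fin n → ℝ) → ℝ) (i : Fin n) : ℝ :=
  ∫ z, (z i - densMean n f i) ^ 2 * f z ∂voln n

/-! On the sup-norm ball of radius `M` around the mean, the set `{f ≤ t}` carries mass at most
`t (2M)ⁿ`; off that ball some coordinate deviates from its mean by more than `M`, so Chebyshev
bounds the mass there by `∑ Var(Zᵢ) / M²`. For `n = 2` the choice `M = (S / t) ^ (1 / 4)` with
`S = ∑ Var(Zᵢ)` gives `5 √(t S)`; when `S = 0`, let `M → 0`. -/

open Topology

section Anticoncentration

variable {α : Type*} [MeasurableSpace α] {μ : Measure α} {f : α → ℝ}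

theorem integral_indicator_sublevel_le {B : Set α} (hB : MeasurableSet B) (hBμ : μ B ≠ ∞)
    (hf : 0 ≤ f) (hfi : Integrable f μ) {t : ℝ} (ht : 0 ≤ t) :
    ∫ x, {x | f x ≤ t}.indicator f x ∂μ ≤ t * μ.real B + ∫ x in Bᶜ, f x ∂μ := by
  have hpt : {x | f x ≤ t}.indicator f ≤ B.indicator (fun _ => t) + Bᶜ.indicator f := by
    intro x
    have hfx0 : 0 ≤ f x := hf x
    by_cases hx : x ∈ B <;> by_cases hfx : f x ≤ t <;> simp [hx, hfx, hfx0, ht]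
  have hint : Integrable (B.indicator fun _ => t) μ :=
    (integrableOn_const hBμ).integrable_indicator hB
  calc ∫ x, {x | f x ≤ t}.indicator f x ∂μ
      ≤ ∫ x, (B.indicator (fun _ => t) + Bᶜ.indicator f) x ∂μ :=
        integral_mono_of_nonneg (ae_of_all _ (indicator_nonneg fun x _ => hf x))
          (hint.add (hfi.indicator hB.compl)) (ae_of_all _ hpt)
    _ = t * μ.real B + ∫ x in Bᶜ, f x ∂μ := by
        rw [integral_add' hint (hfi.indicator hB.compl), integral_indicator_const _ hB,
          integral_indicator hB.compl, smul_eq_mul, mul_comm]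

theorem _root_.MeasureTheory.Integrable.sub_sq_mul {g : α → ℝ}
    (hg2 : Integrable (fun x => g x ^ 2 * f x) μ) (hf : 0 ≤ f) (hfi : Integrable f μ)
    (hg : AEStronglyMeasurable g μ) (c : ℝ) :
    Integrable (fun x => (g x - c) ^ 2 * f x) μ := by
  refine ((hg2.const_mul 2).add (hfi.const_mul (2 * c ^ 2))).mono'
    (((hg.sub aestronglyMeasurable_const).pow 2).mul hfi.1) (ae_of_all _ fun x => ?_)
  have hfx : 0 ≤ f x := hf x
  rw [Real.norm_of_nonneg (mul_nonneg (sq_nonneg _) hfx), Pi.add_apply]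
  nlinarith [mul_nonneg (sq_nonneg (g x + c)) hfx]

variable {ι : Type*} [Fintype ι]

theorem one_le_sum_sq_div_of_notMem_closedBall {c z : ι → ℝ} {M : ℝ} (hM : 0 < M)
    (hz : z ∉ Metric.closedBall c M) :
    1 ≤ (∑ i, (z i - c i) ^ 2) / M ^ 2 := by
  rw [Metric.mem_closedBall, dist_pi_le_iff hM.le] at hz
  push Not at hz
  obtain ⟨i, hi⟩ := hz
  rw [Real.dist_eq] at hi
  rw [one_le_div (by positivity)]
  calc M ^ 2 ≤ (z i - c i) ^ 2 := by nlinarith [sq_abs (z i - c i)]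
    _ ≤ ∑ j, (z j - c j) ^ 2 :=
      Finset.single_le_sum (f := fun j => (z j - c j) ^ 2) (fun j _ => sq_nonneg _)
        (Finset.mem_univ i)

theorem setIntegral_compl_closedBall_le {μ : Measure (ι → ℝ)} {f : (ι → ℝ) → ℝ}
    (hf : 0 ≤ f) {c : ι → ℝ} (hsq : ∀ i, Integrable (fun z => (z i - c i) ^ 2 * f z) μ)
    {M : ℝ} (hM : 0 < M) :
    ∫ z in (Metric.closedBall c M)ᶜ, f z ∂μ
      ≤ (∑ i, ∫ z, (z i - c i) ^ 2 * f z ∂μ) / M ^ 2 := by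
  rw [← integral_indicator Metric.isClosed_closedBall.measurableSet.compl,
    ← integral_finsetSum _ fun i _ => hsq i, ← integral_div]
  refine integral_mono_of_nonneg (ae_of_all _ (indicator_nonneg fun x _ => hf x))
    ((integrable_finsetSum _ fun i _ => hsq i).div_const _) (ae_of_all _ fun z => ?_)
  by_cases hz : z ∈ Metric.closedBall c M
  · rw [indicator_of_notMem (notMem_compl_iff.2 hz)]
    exact div_nonneg (Finset.sum_nonneg fun i _ => mul_nonneg (sq_nonneg _) (hf z)) (sq_nonneg M)
  · rw [indicator_of_mem hz]
    show f z ≤ (∑ i, (z i - c i) ^ 2 * f z) / M ^ 2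
    rw [← Finset.sum_mul, mul_div_right_comm]
    exact le_mul_of_one_le_left (hf z) (one_le_sum_sq_div_of_notMem_closedBall hM hz)

end Anticoncentration

theorem densVar_nonneg {n : ℕ} {f : (Fin n → ℝ) → ℝ} (hf : ∀ z, 0 ≤ f z) (i : Fin n) :
    0 ≤ densVar n f i :=
  integral_nonneg fun z => mul_nonneg (sq_nonneg _) (hf z)

theorem le_five_mul_sqrt_mul_sqrt_of_forall_le {X t S : ℝ} (ht : 0 < t) (hS : 0 ≤ S)
    (h : ∀ M : ℝ, 0 < M → X ≤ (2 * M) ^ 2 * t + S / M ^ 2) : X ≤ 5 * √t * √S := by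
  rcases hS.eq_or_lt with rfl | hS
  · have hlim : Tendsto (fun M : ℝ => (2 * M) ^ 2 * t + 0 / M ^ 2) (𝓝[>] 0) (𝓝 0) := by
      simp only [zero_div, add_zero]
      exact tendsto_nhdsWithin_of_tendsto_nhds
        ((by fun_prop : Continuous fun M : ℝ => (2 * M) ^ 2 * t).tendsto' 0 0 (by simp))
    simpa using ge_of_tendsto hlim (eventually_nhdsWithin_of_forall h)
  obtain ⟨a, ha, rfl⟩ : ∃ a, 0 < a ∧ t = a ^ 2 :=
    ⟨√t, Real.sqrt_pos.2 ht, (Real.sq_sqrt ht.le).symm⟩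
  obtain ⟨b, hb, rfl⟩ : ∃ b, 0 < b ∧ S = b ^ 2 :=
    ⟨√S, Real.sqrt_pos.2 hS, (Real.sq_sqrt hS.le).symm⟩
  have hM2 : √(b / a) ^ 2 = b / a := Real.sq_sqrt (by positivity)
  rw [Real.sqrt_sq ha.le, Real.sqrt_sq hb.le]
  calc X ≤ (2 * √(b / a)) ^ 2 * a ^ 2 + b ^ 2 / √(b / a) ^ 2 := h _ (by positivity)
    _ = 5 * a * b := by
      rw [mul_pow, hM2]
      field_simp
      ring

theorem lem_anticoncentration_general (n : ℕ) (f : (Fin n → ℝ) → ℝ)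
    (hnn : ∀ z, 0 ≤ f z)
    (hint : ∫ z, f z ∂voln n = 1)
    (hmom : ∀ i, Integrable (fun z => z i ^ 2 * f z) (voln n)) :
    (∀ M : ℝ, 0 < M → ∀ tv : ℝ, 0 < tv →
      ∫ z, Set.indicator {z | f z ≤ tv} f z ∂voln n
        ≤ (2 * M) ^ n * tv + (∑ i, densVar n f i) / M ^ 2) ∧
    (n = 2 → ∀ tv : ℝ, 0 < tv →
      ∫ z, Set.indicator {z | f z ≤ tv} f z ∂voln n
        ≤ 5 * tv ^ ((1 : ℝ) / 2) * (∑ i, densVar n f i) ^ ((1 : ℝ) / 2)) := by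
  have hvol : voln n = volume := volume_pi.symm
  have hfi : Integrable f (voln n) := .of_integral_ne_zero (by simp [hint])
  have hvar : ∀ i, Integrable (fun z => (z i - densMean n f i) ^ 2 * f z) (voln n) :=
    fun i => (hmom i).sub_sq_mul hnn hfi (measurable_pi_apply i).aestronglyMeasurable _
  have hbound : ∀ M : ℝ, 0 < M → ∀ tv : ℝ, 0 < tv →
      ∫ z, Set.indicator {z | f z ≤ tv} f z ∂voln n
        ≤ (2 * M) ^ n * tv + (∑ i, densVar n f i) / M ^ 2 := by
    intro M hM tv htv
    rw [hvol] at hfi hvar ⊢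
    have hball : volume.real (Metric.closedBall (densMean n f) M) = (2 * M) ^ n := by
      rw [measureReal_def, Real.volume_pi_closedBall _ hM.le, Fintype.card_fin,
        ENNReal.toReal_ofReal (by positivity)]
    calc ∫ z, Set.indicator {z | f z ≤ tv} f z ∂volume
        ≤ tv * volume.real (Metric.closedBall (densMean n f) M)
          + ∫ z in (Metric.closedBall (densMean n f) M)ᶜ, f z ∂volume :=
          integral_indicator_sublevel_le Metric.isClosed_closedBall.measurableSet
            measure_closedBall_lt_top.ne hnn hfi htv.le
      _ ≤ (2 * M) ^ n * tv + (∑ i, densVar n f i) / M ^ 2 := by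
          rw [hball, mul_comm]
          gcongr
          exact setIntegral_compl_closedBall_le hnn hvar hM
  refine ⟨hbound, ?_⟩
  rintro rfl tv htv
  rw [← Real.sqrt_eq_rpow, ← Real.sqrt_eq_rpow]
  exact le_five_mul_sqrt_mul_sqrt_of_forall_le htv
    (Finset.sum_nonneg fun i _ => densVar_nonneg hnn i) fun M hM => hbound M hM tv htv

/-- Lemma SM6.9: anti-concentration of a density at its small values. -/
theorem lem_anticoncentration (n : ℕ) (f : (Fin n → ℝ) → ℝ)
    (hmeas : Measurable f) (hnn : ∀ z, 0 ≤ f z)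
    (hint : ∫ z, f z ∂voln n = 1)
    (hmom : ∀ i, Integrable (fun z => z i ^ 2 * f z) (voln n)) :
    (∀ M : ℝ, 0 < M → ∀ tv : ℝ, 0 < tv →
      ∫ z, Set.indicator {z | f z ≤ tv} f z ∂voln n
        ≤ (2 * M) ^ n * tv + (∑ i, densVar n f i) / M ^ 2) ∧
    (n = 2 → ∀ tv : ℝ, 0 < tv →
      ∫ z, Set.indicator {z | f z ≤ tv} f z ∂voln n
        ≤ 5 * tv ^ ((1 : ℝ) / 2) * (∑ i, densVar n f i) ^ ((1 : ℝ) / 2)) :=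
  lem_anticoncentration_general n f hnn hint hmom


end PolicyEB
end
end
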